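/- arXiv:2407.18099 — 4 statements merged into one kernel-verified Lean document; each statement's English description precedes it below -/
import Mathlib

section
/- Let n, m be positive integers and let A, C, Q, V be continuous matrix-valued functions on [0,∞) with A(t) ∈ ℝ^{n×n}, C(t) ∈ ℝ^{m×n}, Q(t) ∈ ℝ^{m×m} positive semidefinite, and V(t) ∈ ℝ^{n×n} symmetric with V(t) ≥ v_m I_n for some constant v_m > 0 and all t ≥ 0. Let P : [0,∞) → ℝ^{n×n} be differentiable, symmetric-valued, satisfying the continuous Riccati equation Ṗ(t) = A(t)P(t) + P(t)A(t)ᵀ − P(t)C(t)ᵀQ(t)C(t)P(t) + V(t), and suppose there exist constants 0 < p_m < p_M < ∞ with p_m I_n ≤ P(t) ≤ p_M I_n for all t ≥ 0. Define the gain K(t) := P(t)C(t)ᵀQ(t) and let x̃ : [0,∞) → ℝⁿ be differentiable with x̃'(t) = (A(t) − K(t)C(t)) x̃(t). Then, with λ := v_m p_m /(2 p_M²) and α := (p_M/p_m)^{1/2}, one has ‖x̃(t)‖ ≤ α e^{−λt} ‖x̃(0)‖ for all t ≥ 0; in particular the equilibrium x̃ = 0 is globally exponentially stable. -/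
/-!
`g = x̃ᵀ P⁻¹ x̃` is a Lyapunov function for the error dynamics. Differentiating `P⁻¹` through
the Riccati equation, the closed-loop terms cancel and
`ġ = -x̃ᵀ (P⁻¹ V P⁻¹ + Cᵀ Q C) x̃ ≤ -v_m ‖P⁻¹ x̃‖² ≤ -(v_m / p_M) g`.
Gronwall gives `g t ≤ e^{-(v_m / p_M) t} g 0`, and `‖x̃‖² / p_M ≤ g ≤ ‖x̃‖² / p_m` turns this into
the norm bound with rate `v_m / (2 p_M) ≥ λ`.
-/

open Matrix

noncomputable section

/-- Euclidean norm of a vector. -/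
def euclidEnorm {α : Type*} [Fintype α] (x : α → ℝ) : ℝ :=
  Real.sqrt (∑ a, x a ^ 2)

open Set Filter

theorem le_mul_exp_of_hasDerivWithinAt_le_mul {g g' : ℝ → ℝ} {K a : ℝ}
    (hg : ∀ t ≥ a, HasDerivWithinAt g (g' t) (Ici a) t)
    (hbound : ∀ t ≥ a, g' t ≤ K * g t) :
    ∀ t ≥ a, g t ≤ g a * Real.exp (K * (t - a)) := by
  intro t ht
  have h := le_gronwallBound_of_liminf_deriv_right_le (f := g) (f' := g') (δ := g a) (K := K)
    (ε := 0) (a := a) (b := t)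
    (fun x hx => (hg x hx.1).continuousWithinAt.mono Icc_subset_Ici_self)
    (fun x hx _ hr => ((hg x hx.1).mono (Ici_subset_Ici.2 hx.1)).liminf_right_slope_le hr)
    le_rfl (fun x hx => by simpa using hbound x hx.1) t ⟨ht, le_rfl⟩
  rwa [gronwallBound_ε0] at h

theorem HasDerivWithinAt.mul_of_continuousWithinAt_of_eq_zero {𝕜 : Type*}
    [NontriviallyNormedField 𝕜] {f g : 𝕜 → 𝕜} {g' : 𝕜} {s : Set 𝕜} {t : 𝕜}
    (hf : ContinuousWithinAt f s t) (hg : HasDerivWithinAt g g' s t)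
    (hg0 : g t = 0) : HasDerivWithinAt (fun u => f u * g u) (f t * g') s t := by
  rw [hasDerivWithinAt_iff_tendsto_slope] at hg ⊢
  have hslope : ∀ u, slope (fun u => f u * g u) t u = f u * slope g t u := fun u => by
    simp only [slope_def_field, hg0, mul_zero, sub_zero, mul_div_assoc]
  exact (Tendsto.mul (hf.mono sdiff_subset) hg).congr fun u => (hslope u).symm

theorem hasDerivWithinAt_dotProduct_mulVec {ι 𝕜 : Type*} [Fintype ι] [NontriviallyNormedField 𝕜]
    {M : 𝕜 → Matrix ι ι 𝕜} {M' : Matrix ι ι 𝕜} {x : 𝕜 → ι → 𝕜} {x' : ι → 𝕜} {s : Set 𝕜} {t : 𝕜}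
    (hM : ∀ i j, HasDerivWithinAt (fun u => M u i j) (M' i j) s t)
    (hx : ∀ i, HasDerivWithinAt (fun u => x u i) (x' i) s t) :
    HasDerivWithinAt (fun u => x u ⬝ᵥ (M u *ᵥ x u))
      (x' ⬝ᵥ (M t *ᵥ x t) + x t ⬝ᵥ (M' *ᵥ x t) + x t ⬝ᵥ (M t *ᵥ x')) s t := by
  have h := HasDerivWithinAt.fun_sum (u := Finset.univ) fun i _ =>
    HasDerivWithinAt.fun_sum (u := Finset.univ) fun j _ => (hx i).fun_mul ((hM i j).fun_mul (hx j))
  have hfun : (fun u => x u ⬝ᵥ (M u *ᵥ x u)) = fun u => ∑ i, ∑ j, x u i * (M u i j * x u j) := by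
    funext u
    simp only [dotProduct, mulVec, Finset.mul_sum]
  rw [hfun]
  refine h.congr_deriv ?_
  simp only [dotProduct, mulVec, Finset.mul_sum, ← Finset.sum_add_distrib]
  exact Finset.sum_congr rfl fun i _ => Finset.sum_congr rfl fun j _ => by ring

theorem hasDerivWithinAt_matrix_inv_apply {ι 𝕜 : Type*} [Fintype ι] [DecidableEq ι]
    [NontriviallyNormedField 𝕜] [CompleteSpace 𝕜] {P : 𝕜 → Matrix ι ι 𝕜} {P' : Matrix ι ι 𝕜}
    {s : Set 𝕜} {t : 𝕜} (ht : t ∈ s)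
    (hP : ∀ i j, HasDerivWithinAt (fun u => P u i j) (P' i j) s t)
    (hdet : ∀ u ∈ s, IsUnit (P u).det) (i j : ι) :
    HasDerivWithinAt (fun u => (P u)⁻¹ i j) ((-((P t)⁻¹ * P' * (P t)⁻¹)) i j) s t := by
  have hcont : ContinuousWithinAt (fun u => (P u)⁻¹) s t := by
    have hPt : ContinuousWithinAt P s t := continuousWithinAt_pi.2 fun i =>
      continuousWithinAt_pi.2 fun j => (hP i j).continuousWithinAt
    refine (continuousAt_matrix_inv _ ?_).comp_continuousWithinAt hPt
    simpa using NormedRing.inverse_continuousAt (hdet t ht).unit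
  -- `P u⁻¹ - P t⁻¹ = P u⁻¹ (P t - P u) P t⁻¹`: the right factor vanishes at `u = t`, so the
  -- left one only needs to be continuous.
  have hresolvent : ∀ u ∈ s, (P u)⁻¹ i j = (P t)⁻¹ i j
      + ∑ k, (P u)⁻¹ i k * ∑ l, (P t k l - P u k l) * (P t)⁻¹ l j := by
    intro u hu
    have h : (P u)⁻¹ = (P t)⁻¹ + (P u)⁻¹ * ((P t - P u) * (P t)⁻¹) := by
      rw [Matrix.sub_mul, Matrix.mul_sub, mul_nonsing_inv _ (hdet t ht),
        ← Matrix.mul_assoc, nonsing_inv_mul _ (hdet u hu), Matrix.one_mul, Matrix.mul_one,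
        add_sub_cancel]
    simpa only [Matrix.add_apply, mul_apply, Matrix.sub_apply] using congrArg (· i j) h
  have hderiv : HasDerivWithinAt
      (fun u => (P t)⁻¹ i j + ∑ k, (P u)⁻¹ i k * ∑ l, (P t k l - P u k l) * (P t)⁻¹ l j)
      (∑ k, (P t)⁻¹ i k * ∑ l, -P' k l * (P t)⁻¹ l j) s t :=
    (HasDerivWithinAt.fun_sum fun k _ => HasDerivWithinAt.mul_of_continuousWithinAt_of_eq_zero
      ((continuous_apply_apply i k).continuousAt.comp_continuousWithinAt hcont)
      (HasDerivWithinAt.fun_sum fun l _ => ((hP k l).const_sub _).mul_const _)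
      (by simp only [sub_self, zero_mul, Finset.sum_const_zero])).const_add _
  refine (hderiv.congr hresolvent (hresolvent t ht)).congr_deriv ?_
  simp only [Matrix.neg_apply, mul_apply, Finset.mul_sum, neg_mul, mul_neg,
    Finset.sum_neg_distrib, mul_assoc]

section PosDef
variable {ι 𝕜 : Type*} [Fintype ι] [DecidableEq ι] [RCLike 𝕜]
open scoped ComplexOrder

open scoped MatrixOrder in
theorem Matrix.PosDef.exists_sqrt_inv {P : Matrix ι ι 𝕜} (hP : P.PosDef) :
    ∃ R : Matrix ι ι 𝕜, Rᴴ = R ∧ R * R = P⁻¹ ∧ R * P * R = 1 := by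
  have hR : 0 ≤ CFC.sqrt P⁻¹ := CFC.sqrt_nonneg _
  have hRR : CFC.sqrt P⁻¹ * CFC.sqrt P⁻¹ = P⁻¹ :=
    CFC.sqrt_mul_sqrt_self _ hP.inv.posSemidef.nonneg
  refine ⟨CFC.sqrt P⁻¹, (nonneg_iff_posSemidef.1 hR).1, hRR, ?_⟩
  rw [← mul_eq_one_comm, ← Matrix.mul_assoc, hRR]
  exact nonsing_inv_mul _ ((isUnit_iff_isUnit_det P).1 hP.isUnit)

theorem Matrix.PosDef.posSemidef_smul_inv_sub_one {P : Matrix ι ι 𝕜} (hP : P.PosDef) {c : ℝ}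
    (h : (c • 1 - P).PosSemidef) : (c • P⁻¹ - 1).PosSemidef := by
  obtain ⟨R, hRh, hRR, hRPR⟩ := hP.exists_sqrt_inv
  have := h.conjTranspose_mul_mul_same R
  rwa [hRh, Matrix.mul_sub, Matrix.sub_mul, hRPR, mul_smul_comm, Matrix.mul_one, smul_mul_assoc,
    hRR] at this

theorem Matrix.PosDef.posSemidef_one_sub_smul_inv {P : Matrix ι ι 𝕜} (hP : P.PosDef) {c : ℝ}
    (h : (P - c • 1).PosSemidef) : (1 - c • P⁻¹).PosSemidef := by
  obtain ⟨R, hRh, hRR, hRPR⟩ := hP.exists_sqrt_inv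
  have := h.conjTranspose_mul_mul_same R
  rwa [hRh, Matrix.mul_sub, Matrix.sub_mul, hRPR, mul_smul_comm, Matrix.mul_one, smul_mul_assoc,
    hRR] at this

end PosDef

theorem Matrix.dotProduct_mulVec_le_of_posSemidef_sub {n : Type*} [Fintype n]
    {M N : Matrix n n ℝ} (h : (M - N).PosSemidef) (x : n → ℝ) :
    x ⬝ᵥ (N *ᵥ x) ≤ x ⬝ᵥ (M *ᵥ x) := by
  have := h.dotProduct_mulVec_nonneg x
  simp only [star_trivial, sub_mulVec, dotProduct_sub, sub_nonneg] at this
  exact this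

section Riccati
variable {n m : Type*} [Fintype n] [DecidableEq n] [Fintype m]

theorem riccati_closedLoop_lyapunov_eq {R : Type*} [CommRing R] (A P V : Matrix n n R)
    (C : Matrix m n R) (Q : Matrix m m R) (hP : IsUnit P.det) (hPsym : Pᵀ = P) (hQsym : Qᵀ = Q) :
    (A - P * Cᵀ * Q * C)ᵀ * P⁻¹ - P⁻¹ * (A * P + P * Aᵀ - P * Cᵀ * Q * C * P + V) * P⁻¹
      + P⁻¹ * (A - P * Cᵀ * Q * C) = -(P⁻¹ * V * P⁻¹) - Cᵀ * Q * C := by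
  have hPS := mul_nonsing_inv P hP
  have hT : (A - P * Cᵀ * Q * C)ᵀ = Aᵀ - Cᵀ * Q * C * P := by
    simp only [transpose_sub, transpose_mul, transpose_transpose, hPsym, hQsym, Matrix.mul_assoc]
  have hSPA : P⁻¹ * (P * (Aᵀ * P⁻¹)) = Aᵀ * P⁻¹ := by
    rw [← Matrix.mul_assoc, nonsing_inv_mul P hP, Matrix.one_mul]
  rw [hT]
  simp only [Matrix.sub_mul, Matrix.mul_sub, Matrix.add_mul, Matrix.mul_add, Matrix.mul_assoc,
    hSPA, hPS, Matrix.mul_one]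
  abel

theorem riccati_lyapunov_deriv_le (A P V : Matrix n n ℝ) (C : Matrix m n ℝ) (Q : Matrix m m ℝ)
    (x : n → ℝ) {vm pM : ℝ} (hvm : 0 ≤ vm) (hpM : 0 < pM) (hP : P.PosDef) (hQ : Q.PosSemidef)
    (hV : (V - vm • 1).PosSemidef) (hPM : (pM • 1 - P).PosSemidef) :
    ((A - P * Cᵀ * Q * C) *ᵥ x) ⬝ᵥ (P⁻¹ *ᵥ x)
      + x ⬝ᵥ (-(P⁻¹ * (A * P + P * Aᵀ - P * Cᵀ * Q * C * P + V) * P⁻¹) *ᵥ x)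
      + x ⬝ᵥ (P⁻¹ *ᵥ ((A - P * Cᵀ * Q * C) *ᵥ x)) ≤ -(vm / pM) * (x ⬝ᵥ (P⁻¹ *ᵥ x)) := by
  set S := P⁻¹
  have hS : Sᴴ = S := hP.inv.1
  have hdet : IsUnit P.det := (isUnit_iff_isUnit_det P).1 hP.isUnit
  have hPsym : Pᵀ = P := hP.1
  have hQsym : Qᵀ = Q := hQ.1
  have hlhs : ((A - P * Cᵀ * Q * C) *ᵥ x) ⬝ᵥ (S *ᵥ x)
      + x ⬝ᵥ (-(S * (A * P + P * Aᵀ - P * Cᵀ * Q * C * P + V) * S) *ᵥ x)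
      + x ⬝ᵥ (S *ᵥ ((A - P * Cᵀ * Q * C) *ᵥ x))
      = -(x ⬝ᵥ ((S * V * S) *ᵥ x)) - x ⬝ᵥ ((Cᵀ * Q * C) *ᵥ x) := by
    have h := congrArg (fun M => x ⬝ᵥ (M *ᵥ x))
      (riccati_closedLoop_lyapunov_eq A P V C Q hdet hPsym hQsym)
    simp only [add_mulVec, sub_mulVec, neg_mulVec, dotProduct_add, dotProduct_sub,
      dotProduct_neg, ← mulVec_mulVec, dotProduct_mulVec, vecMul_transpose] at h ⊢
    linarith
  have hCQC : 0 ≤ x ⬝ᵥ ((Cᵀ * Q * C) *ᵥ x) := by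
    simpa using (hQ.conjTranspose_mul_mul_same C).dotProduct_mulVec_nonneg x
  have hSVS : x ⬝ᵥ ((vm • (S * S)) *ᵥ x) ≤ x ⬝ᵥ ((S * V * S) *ᵥ x) := by
    refine dotProduct_mulVec_le_of_posSemidef_sub ?_ x
    have := hV.conjTranspose_mul_mul_same S
    rwa [hS, Matrix.mul_sub, Matrix.sub_mul, mul_smul_comm, Matrix.mul_one, smul_mul_assoc] at this
  have hSPS : x ⬝ᵥ (S *ᵥ x) ≤ x ⬝ᵥ ((pM • (S * S)) *ᵥ x) := by
    refine dotProduct_mulVec_le_of_posSemidef_sub ?_ x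
    have := hPM.conjTranspose_mul_mul_same S
    rwa [hS, Matrix.mul_sub, Matrix.sub_mul, mul_smul_comm, Matrix.mul_one, smul_mul_assoc,
      Matrix.mul_assoc, mul_nonsing_inv _ hdet, Matrix.mul_one] at this
  simp only [smul_mulVec, dotProduct_smul, smul_eq_mul] at hSVS hSPS
  have hdecay : vm / pM * (x ⬝ᵥ (S *ᵥ x)) ≤ vm * (x ⬝ᵥ ((S * S) *ᵥ x)) := by
    rw [div_mul_eq_mul_div, div_le_iff₀ hpM]
    nlinarith
  linarith
end Riccati

theorem euclidEnorm_eq_sqrt_dotProduct {ι : Type*} [Fintype ι] (x : ι → ℝ) :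
    euclidEnorm x = √(x ⬝ᵥ x) := by
  simp only [euclidEnorm, dotProduct, sq]

theorem euclidEnorm_le_of_inv_dotProduct_le {n : Type*} [Fintype n] [DecidableEq n]
    {P₀ P₁ : Matrix n n ℝ} {x₀ x₁ : n → ℝ} {pm pM c t : ℝ} (hpm : 0 < pm) (hpM : 0 ≤ pM)
    (hP₀ : P₀.PosDef) (hP₁ : P₁.PosDef) (hlow : (P₀ - pm • 1).PosSemidef)
    (hhigh : (pM • 1 - P₁).PosSemidef)
    (hdecay : x₁ ⬝ᵥ (P₁⁻¹ *ᵥ x₁) ≤ x₀ ⬝ᵥ (P₀⁻¹ *ᵥ x₀) * Real.exp (-c * t)) :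
    euclidEnorm x₁ ≤ √(pM / pm) * Real.exp (-(c / 2) * t) * euclidEnorm x₀ := by
  have h₁ := dotProduct_mulVec_le_of_posSemidef_sub (hP₁.posSemidef_smul_inv_sub_one hhigh) x₁
  have h₀ := dotProduct_mulVec_le_of_posSemidef_sub (hP₀.posSemidef_one_sub_smul_inv hlow) x₀
  simp only [one_mulVec, smul_mulVec, dotProduct_smul, smul_eq_mul] at h₀ h₁
  have hexp : Real.exp (-(c / 2) * t) ^ 2 = Real.exp (-c * t) := by
    rw [← Real.exp_nat_mul]
    ring_nf
  have hx₀ : 0 ≤ x₀ ⬝ᵥ x₀ := by simpa using dotProduct_self_star_nonneg x₀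
  have hsq : x₁ ⬝ᵥ x₁ ≤ pM / pm * Real.exp (-(c / 2) * t) ^ 2 * (x₀ ⬝ᵥ x₀) := by
    rw [hexp]
    calc x₁ ⬝ᵥ x₁ ≤ pM * (x₀ ⬝ᵥ (P₀⁻¹ *ᵥ x₀) * Real.exp (-c * t)) :=
          h₁.trans (mul_le_mul_of_nonneg_left hdecay hpM)
      _ ≤ pM * (x₀ ⬝ᵥ x₀ / pm * Real.exp (-c * t)) := by
        gcongr
        rwa [le_div_iff₀ hpm, mul_comm]
      _ = pM / pm * Real.exp (-c * t) * (x₀ ⬝ᵥ x₀) := by ring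
  rw [euclidEnorm_eq_sqrt_dotProduct, euclidEnorm_eq_sqrt_dotProduct]
  refine Real.sqrt_le_iff.2 ⟨by positivity, ?_⟩
  rwa [mul_pow, mul_pow, Real.sq_sqrt (by positivity), Real.sq_sqrt hx₀]

theorem riccati_observer_GES_general
    (n m : ℕ)
    (A : ℝ → Matrix (Fin n) (Fin n) ℝ)
    (C : ℝ → Matrix (Fin m) (Fin n) ℝ)
    (Q : ℝ → Matrix (Fin m) (Fin m) ℝ)
    (V : ℝ → Matrix (Fin n) (Fin n) ℝ)
    (hQ : ∀ t ≥ (0:ℝ), (Q t).PosSemidef)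
    (vm : ℝ) (hvm : 0 < vm)
    (hV : ∀ t ≥ (0:ℝ), (V t - vm • (1 : Matrix (Fin n) (Fin n) ℝ)).PosSemidef)
    (P : ℝ → Matrix (Fin n) (Fin n) ℝ)
    (hPdyn : ∀ t ≥ (0:ℝ), ∀ i j, HasDerivWithinAt (fun s => P s i j)
      ((A t * P t + P t * (A t)ᵀ - P t * (C t)ᵀ * Q t * C t * P t + V t) i j)
      (Set.Ici 0) t)
    (pm pM : ℝ) (hpm : 0 < pm) (hpmM : pm < pM)
    (hPlow : ∀ t ≥ (0:ℝ), (P t - pm • (1 : Matrix (Fin n) (Fin n) ℝ)).PosSemidef)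
    (hPhigh : ∀ t ≥ (0:ℝ), (pM • (1 : Matrix (Fin n) (Fin n) ℝ) - P t).PosSemidef)
    (K : ℝ → Matrix (Fin n) (Fin m) ℝ)
    (hK : ∀ t, K t = P t * (C t)ᵀ * Q t)
    (xt : ℝ → Fin n → ℝ)
    (hxt : ∀ t ≥ (0:ℝ), ∀ i, HasDerivWithinAt (fun s => xt s i)
      (((A t - K t * C t) *ᵥ xt t) i) (Set.Ici 0) t) :
    ∀ t ≥ (0:ℝ),
      euclidEnorm (xt t) ≤ Real.sqrt (pM / pm) *
        Real.exp (-(vm * pm / (2 * pM ^ 2)) * t) * euclidEnorm (xt 0) := by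
  intro t ht
  have hpM : 0 < pM := hpm.trans hpmM
  have hP : ∀ u ≥ (0:ℝ), (P u).PosDef := fun u hu => by
    simpa using PosDef.posSemidef_add (hPlow u hu) (PosDef.one.smul hpm)
  have hdet : ∀ u ≥ (0:ℝ), IsUnit (P u).det :=
    fun u hu => (isUnit_iff_isUnit_det _).1 (hP u hu).isUnit
  simp only [hK] at hxt
  have hdecay := le_mul_exp_of_hasDerivWithinAt_le_mul
    (fun u hu => hasDerivWithinAt_dotProduct_mulVec
      (hasDerivWithinAt_matrix_inv_apply hu (hPdyn u hu) hdet) (hxt u hu))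
    (fun u hu => riccati_lyapunov_deriv_le (A u) (P u) (V u) (C u) (Q u) (xt u) hvm.le hpM
      (hP u hu) (hQ u hu) (hV u hu) (hPhigh u hu)) t ht
  rw [sub_zero] at hdecay
  refine (euclidEnorm_le_of_inv_dotProduct_le hpm hpM.le (hP 0 le_rfl) (hP t ht)
    (hPlow 0 le_rfl) (hPhigh t ht) hdecay).trans ?_
  have hrate : vm * pm / (2 * pM ^ 2) ≤ vm / pM / 2 := by
    rw [div_div, div_le_div_iff₀ (by positivity) (by positivity)]
    nlinarith [mul_pos hvm hpM]
  gcongr _ * Real.exp ?_ * _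
  exacts [Real.sqrt_nonneg _, mul_le_mul_of_nonneg_right (neg_le_neg hrate) ht]

/-- global exponential stability of the Riccati-observer error
dynamics `x̃' = (A - KC)x̃` with gain `K = PCᵀQ`, where `P` solves the CRE and is
uniformly bounded above and below. -/
theorem riccati_observer_GES
    (n m : ℕ) (hn : 0 < n) (hm : 0 < m)
    (A : ℝ → Matrix (Fin n) (Fin n) ℝ)
    (C : ℝ → Matrix (Fin m) (Fin n) ℝ)
    (Q : ℝ → Matrix (Fin m) (Fin m) ℝ)
    (V : ℝ → Matrix (Fin n) (Fin n) ℝ)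
    (hA : ∀ i j, ContinuousOn (fun t => A t i j) (Set.Ici 0))
    (hC : ∀ i j, ContinuousOn (fun t => C t i j) (Set.Ici 0))
    (hQcont : ∀ i j, ContinuousOn (fun t => Q t i j) (Set.Ici 0))
    (hVcont : ∀ i j, ContinuousOn (fun t => V t i j) (Set.Ici 0))
    (hQ : ∀ t ≥ (0:ℝ), (Q t).PosSemidef)
    (vm : ℝ) (hvm : 0 < vm)
    (hVsym : ∀ t ≥ (0:ℝ), (V t)ᵀ = V t)
    (hV : ∀ t ≥ (0:ℝ), (V t - vm • (1 : Matrix (Fin n) (Fin n) ℝ)).PosSemidef)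
    (P : ℝ → Matrix (Fin n) (Fin n) ℝ)
    (hPsym : ∀ t ≥ (0:ℝ), (P t)ᵀ = P t)
    (hPdyn : ∀ t ≥ (0:ℝ), ∀ i j, HasDerivWithinAt (fun s => P s i j)
      ((A t * P t + P t * (A t)ᵀ - P t * (C t)ᵀ * Q t * C t * P t + V t) i j)
      (Set.Ici 0) t)
    (pm pM : ℝ) (hpm : 0 < pm) (hpmM : pm < pM)
    (hPlow : ∀ t ≥ (0:ℝ), (P t - pm • (1 : Matrix (Fin n) (Fin n) ℝ)).PosSemidef)
    (hPhigh : ∀ t ≥ (0:ℝ), (pM • (1 : Matrix (Fin n) (Fin n) ℝ) - P t).PosSemidef)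
    (K : ℝ → Matrix (Fin n) (Fin m) ℝ)
    (hK : ∀ t, K t = P t * (C t)ᵀ * Q t)
    (xt : ℝ → Fin n → ℝ)
    (hxt : ∀ t ≥ (0:ℝ), ∀ i, HasDerivWithinAt (fun s => xt s i)
      (((A t - K t * C t) *ᵥ xt t) i) (Set.Ici 0) t) :
    ∀ t ≥ (0:ℝ),
      euclidEnorm (xt t) ≤ Real.sqrt (pM / pm) *
        Real.exp (-(vm * pm / (2 * pM ^ 2)) * t) * euclidEnorm (xt 0) :=
  riccati_observer_GES_general n m A C Q V hQ vm hvm hV P hPdyn pm pM hpm hpmM hPlow hPhigh K hK xt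
    hxt
end
end

section
/- Let N ≥ 1 and define Γ := [I₃;…;I₃] ∈ ℝ^{3N×3} (N stacked copies of I₃), Ā := [[0_{3N×3N}, −Γ, 0_{3N×3}],[0_{3×3N}, 0_{3×3}, I₃],[0_{3×3N}, 0_{3×3}, 0_{3×3}]] ∈ ℝ^{(3N+6)×(3N+6)}, and C̄ := [I_{3N}, 0_{3N×3}, 0_{3N×3}] ∈ ℝ^{3N×(3N+6)}. Define the stacked matrix 𝒪_c := [C̄; C̄Ā; C̄Ā²] ∈ ℝ^{9N×(3N+6)}. Then 𝒪_cᵀ 𝒪_c ≥ I_{3N+6} in the positive semidefinite order; in particular 𝒪_c has full column rank 3N+6. -/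
open Matrix

noncomputable section

/-- Index type for `ℝ^{3N+6}`: `N` blocks of size 3 (landmarks), plus two blocks
of size 3 (velocity and gravity). -/
abbrev StateIdx (N : ℕ) := (Fin N × Fin 3) ⊕ (Fin 3 ⊕ Fin 3)

/-- Index type for `ℝ^{3N}`: `N` blocks of size 3. -/
abbrev OutIdx (N : ℕ) := Fin N × Fin 3

/-- `Γ = [I₃; …; I₃]` (`N` stacked copies of `I₃`). -/
def Gam (N : ℕ) : Matrix (Fin N × Fin 3) (Fin 3) ℝ :=
  fun p b => if p.2 = b then 1 else 0

/-- `Ā = [[0, -Γ, 0], [0, 0, I₃], [0, 0, 0]] ∈ ℝ^{(3N+6)×(3N+6)}`. -/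
def Abar (N : ℕ) : Matrix (StateIdx N) (StateIdx N) ℝ :=
  Matrix.fromBlocks 0
    (fun p q => Sum.elim (fun b => -(Gam N p b)) (fun _ => (0:ℝ)) q)
    0
    (Matrix.fromBlocks 0 1 0 0)

/-- `C̄ = [I_{3N}, 0, 0] ∈ ℝ^{3N×(3N+6)}`. -/
def Cbar (N : ℕ) : Matrix (OutIdx N) (StateIdx N) ℝ :=
  fun p q => Sum.elim (fun q' => if p = q' then (1:ℝ) else 0) (fun _ => 0) q

/-- The stacked observability-type matrix `𝒪_c = [C̄; C̄Ā; C̄Ā²] ∈ ℝ^{9N×(3N+6)}`. -/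
def Oc (N : ℕ) : Matrix (OutIdx N ⊕ (OutIdx N ⊕ OutIdx N)) (StateIdx N) ℝ :=
  fun r q => Sum.elim
    (fun p => Cbar N p q)
    (Sum.elim (fun p => (Cbar N * Abar N) p q) (fun p => ((Cbar N * Abar N ^ 2 : Matrix (OutIdx N) (StateIdx N) ℝ)) p q)) r

/-!
The three block rows of `𝒪_c` are `C̄ = [I, 0, 0]`, `C̄Ā = [0, -Γ, 0]` and `C̄Ā² = [0, 0, -Γ]`,
so `𝒪_cᵀ𝒪_c = diag(I_{3N}, ΓᵀΓ, ΓᵀΓ) = diag(I_{3N}, N I₃, N I₃)`, which dominates the identity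
as `N ≥ 1`. A Gram matrix dominating the identity is positive definite, hence invertible, and it
has the same rank as the matrix itself.
-/

namespace Matrix

theorem transpose_fromRows_mul_fromRows {m₁ m₂ n R : Type*} [Fintype m₁] [Fintype m₂]
    [Semiring R] (A₁ : Matrix m₁ n R) (A₂ : Matrix m₂ n R) :
    (fromRows A₁ A₂)ᵀ * fromRows A₁ A₂ = A₁ᵀ * A₁ + A₂ᵀ * A₂ := by
  rw [transpose_fromRows, fromCols_mul_fromRows]

theorem transpose_fromCols_mul_fromCols {m n₁ n₂ R : Type*} [Fintype m] [Semiring R]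
    (A₁ : Matrix m n₁ R) (A₂ : Matrix m n₂ R) :
    (fromCols A₁ A₂)ᵀ * fromCols A₁ A₂ =
      fromBlocks (A₁ᵀ * A₁) (A₁ᵀ * A₂) (A₂ᵀ * A₁) (A₂ᵀ * A₂) := by
  rw [transpose_fromCols, fromRows_mul_fromCols]

theorem rank_eq_card_of_posSemidef_transpose_mul_self_sub_one {m n : Type*} [Fintype m]
    [Fintype n] [DecidableEq n] {A : Matrix m n ℝ} (h : (Aᵀ * A - 1).PosSemidef) :
    A.rank = Fintype.card n := by
  have hpos : (Aᵀ * A).PosDef := by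
    simpa using PosDef.one.add_posSemidef h
  rw [← rank_transpose_mul_self, rank_of_isUnit _ hpos.isUnit]

end Matrix

theorem Gam_transpose_mul_self (N : ℕ) : (Gam N)ᵀ * Gam N = (N : ℝ) • 1 := by
  ext a b
  by_cases h : a = b
  · subst h
    simp [mul_apply, Gam, Fintype.sum_prod_type]
  · simp [mul_apply, Gam, Fintype.sum_prod_type, h, Ne.symm h]

theorem Cbar_eq_fromCols (N : ℕ) : Cbar N = fromCols 1 0 := by
  ext p (q | q) <;> simp [Cbar, one_apply]

theorem Abar_eq_fromBlocks (N : ℕ) :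
    Abar N = fromBlocks 0 (fromCols (-Gam N) 0) 0 (fromBlocks 0 1 0 0) :=
  rfl

theorem Cbar_mul_Abar (N : ℕ) : Cbar N * Abar N = fromCols 0 (fromCols (-Gam N) 0) := by
  rw [Cbar_eq_fromCols, Abar_eq_fromBlocks, fromCols_mul_fromBlocks]
  simp

theorem Cbar_mul_Abar_sq (N : ℕ) : Cbar N * Abar N ^ 2 = fromCols 0 (fromCols 0 (-Gam N)) := by
  rw [sq, ← Matrix.mul_assoc, Cbar_mul_Abar, Abar_eq_fromBlocks, fromCols_mul_fromBlocks,
    fromCols_mul_fromBlocks]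
  simp

theorem Oc_eq_fromRows (N : ℕ) :
    Oc N = fromRows (Cbar N) (fromRows (Cbar N * Abar N) (Cbar N * Abar N ^ 2)) := by
  ext (p | p | p) q <;> rfl

theorem Oc_transpose_mul_self (N : ℕ) :
    (Oc N)ᵀ * Oc N = diagonal (Sum.elim 1 fun _ => (N : ℝ)) := by
  rw [Oc_eq_fromRows, transpose_fromRows_mul_fromRows, transpose_fromRows_mul_fromRows,
    Cbar_mul_Abar, Cbar_mul_Abar_sq, Cbar_eq_fromCols]
  simp only [transpose_fromCols_mul_fromCols, transpose_zero, transpose_one, transpose_neg,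
    Matrix.zero_mul, Matrix.mul_zero, Matrix.one_mul, Matrix.neg_mul, Matrix.mul_neg, neg_neg,
    neg_zero, Gam_transpose_mul_self, fromBlocks_add, add_zero, zero_add]
  rw [smul_one_eq_diagonal, fromBlocks_diagonal, ← diagonal_one, fromBlocks_diagonal]
  congr 1
  ext (i | i | i) <;> rfl

/-- `𝒪_cᵀ𝒪_c ≥ I_{3N+6}`; in particular `𝒪_c` has full column
rank `3N+6`. -/
theorem Oc_full_column_rank
    (N : ℕ) (hN : 1 ≤ N) :
    ((Oc N)ᵀ * Oc N - 1).PosSemidef ∧ (Oc N).rank = 3 * N + 6 := by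
  have hpsd : ((Oc N)ᵀ * Oc N - 1).PosSemidef := by
    rw [Oc_transpose_mul_self, ← diagonal_one, diagonal_sub, posSemidef_diagonal_iff]
    rintro (i | i) <;> simp [hN]
  refine ⟨hpsd, ?_⟩
  rw [rank_eq_card_of_posSemidef_transpose_mul_self_sub_one hpsd]
  simp only [Fintype.card_sum, Fintype.card_prod, Fintype.card_fin]
  ring
end
end

section
/- Let M ≥ 1, let ρ₁,…,ρ_M ∈ (0,1) with Σᵢρᵢ = 1, let ν₁,…,ν_M ∈ ℝ³ with Σᵢρᵢνᵢ = 0, and set 𝖬 := Σᵢ ρᵢ νᵢνᵢᵀ. Let R̃, R̂ ∈ SO(3), p̃ ∈ ℝ³, and ᴮp̃₁,…,ᴮp̃_M ∈ ℝ³, and define ξᵢ := R̃ᵀp̃ + (I₃ − R̃ᵀ)νᵢ + R̂ ᴮp̃ᵢ for each i. Then the attitude innovation satisfies σ_R := (1/2) Σᵢ ρᵢ νᵢ × ξᵢ = ψ(𝖬R̃) + (1/2) Σᵢ ρᵢ νᵢ^× R̂ ᴮp̃ᵢ. -/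
open Matrix

noncomputable section

/-- `SO(3)`: rotation matrices. -/
def SO3 (R : Matrix (Fin 3) (Fin 3) ℝ) : Prop :=
  R * Rᵀ = 1 ∧ Rᵀ * R = 1 ∧ R.det = 1

/-- Skew-symmetric matrix `u^×` with `u^× y = u × y`. -/
def skew (u : Fin 3 → ℝ) : Matrix (Fin 3) (Fin 3) ℝ :=
  !![0, -u 2, u 1; u 2, 0, -u 0; -u 1, u 0, 0]

/-- `ψ(A) = (1/2)(a₃₂ - a₂₃, a₁₃ - a₃₁, a₂₁ - a₁₂)ᵀ`. -/
def psiMap (A : Matrix (Fin 3) (Fin 3) ℝ) : Fin 3 → ℝ :=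
  ![(A 2 1 - A 1 2) / 2, (A 0 2 - A 2 0) / 2, (A 1 0 - A 0 1) / 2]

/-!
The translational error `R̃ᵀp̃` drops out because the weighted points are centred,
`Σ ρᵢ νᵢ = 0`. For the rotational part, `ψ(a bᵀ) = ½ b × a` turns
`ψ(𝖬R̃) = Σ ρᵢ ψ(νᵢ (R̃ᵀνᵢ)ᵀ)` into `½ Σ ρᵢ R̃ᵀνᵢ × νᵢ = ½ Σ ρᵢ νᵢ × (I₃ − R̃ᵀ)νᵢ`,
using `νᵢ × νᵢ = 0`.
-/

theorem skew_mulVec (u x : Fin 3 → ℝ) : skew u *ᵥ x = u ⨯₃ x := by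
  ext j
  fin_cases j <;> simp [skew, crossProduct, mulVec, dotProduct, Fin.sum_univ_three] <;> ring

theorem psiMap_add (A B : Matrix (Fin 3) (Fin 3) ℝ) :
    psiMap (A + B) = psiMap A + psiMap B := by
  ext j
  fin_cases j <;> simp [psiMap] <;> ring

theorem psiMap_smul (c : ℝ) (A : Matrix (Fin 3) (Fin 3) ℝ) :
    psiMap (c • A) = c • psiMap A := by
  ext j
  fin_cases j <;> simp [psiMap] <;> ring

theorem psiMap_sum {ι : Type*} (s : Finset ι) (A : ι → Matrix (Fin 3) (Fin 3) ℝ) :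
    psiMap (∑ i ∈ s, A i) = ∑ i ∈ s, psiMap (A i) :=
  map_sum (AddMonoidHom.mk' psiMap psiMap_add) A s

theorem psiMap_vecMulVec (a b : Fin 3 → ℝ) : psiMap (vecMulVec a b) = (1/2 : ℝ) • b ⨯₃ a := by
  ext j
  fin_cases j <;> simp [psiMap, vecMulVec, crossProduct] <;> ring

theorem psiMap_vecMulVec_self_mul (v : Fin 3 → ℝ) (R : Matrix (Fin 3) (Fin 3) ℝ) :
    psiMap (vecMulVec v v * R) = (1/2 : ℝ) • v ⨯₃ ((1 - Rᵀ) *ᵥ v) := by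
  rw [vecMulVec_mul, ← mulVec_transpose, psiMap_vecMulVec, sub_mulVec, one_mulVec,
    map_sub, cross_self, zero_sub, cross_anticomm]

theorem psiMap_sum_smul_vecMulVec_mul {ι : Type*} (s : Finset ι) (c : ι → ℝ)
    (v : ι → Fin 3 → ℝ) (R : Matrix (Fin 3) (Fin 3) ℝ) :
    psiMap ((∑ i ∈ s, c i • vecMulVec (v i) (v i)) * R) =
      (1/2 : ℝ) • ∑ i ∈ s, c i • v i ⨯₃ ((1 - Rᵀ) *ᵥ v i) := by
  simp only [Finset.sum_mul, psiMap_sum, smul_mul_assoc, psiMap_smul,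
    psiMap_vecMulVec_self_mul, Finset.smul_sum, smul_comm (c _) (1/2 : ℝ)]

theorem sum_smul_cross {ι : Type*} (s : Finset ι) (c : ι → ℝ) (v : ι → Fin 3 → ℝ)
    (w : Fin 3 → ℝ) : ∑ i ∈ s, c i • v i ⨯₃ w = (∑ i ∈ s, c i • v i) ⨯₃ w := by
  simp [map_sum, LinearMap.sum_apply]

theorem attitude_innovation_decomposition_general
    (M : ℕ)
    (ρ : Fin M → ℝ)
    (ν : Fin M → Fin 3 → ℝ) (hν : ∑ i, ρ i • ν i = 0)
    (Mmat : Matrix (Fin 3) (Fin 3) ℝ) (hMmat : Mmat = ∑ i, ρ i • Matrix.vecMulVec (ν i) (ν i))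
    (Rtil Rhat : Matrix (Fin 3) (Fin 3) ℝ)
    (ptil : Fin 3 → ℝ) (Bptil : Fin M → Fin 3 → ℝ)
    (ξ : Fin M → Fin 3 → ℝ)
    (hξ : ∀ i, ξ i = Rtilᵀ *ᵥ ptil + (1 - Rtilᵀ) *ᵥ ν i + Rhat *ᵥ Bptil i) :
    (1/2 : ℝ) • ∑ i, ρ i • (crossProduct (ν i) (ξ i)) =
      psiMap (Mmat * Rtil) + (1/2 : ℝ) • ∑ i, ρ i • (skew (ν i) *ᵥ (Rhat *ᵥ Bptil i)) := by
  have htranslation : ∑ i, ρ i • ν i ⨯₃ (Rtilᵀ *ᵥ ptil) = 0 := by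
    rw [sum_smul_cross, hν, map_zero, LinearMap.zero_apply]
  simp only [hξ, map_add, smul_add, Finset.sum_add_distrib, htranslation, zero_add,
    hMmat, psiMap_sum_smul_vecMulVec_mul, skew_mulVec]

/-- decomposition of the attitude innovation term `σ_R`. -/
theorem attitude_innovation_decomposition
    (M : ℕ) (hM : 1 ≤ M)
    (ρ : Fin M → ℝ) (hρ : ∀ i, ρ i ∈ Set.Ioo (0 : ℝ) 1)
    (hρsum : ∑ i, ρ i = 1)
    (ν : Fin M → Fin 3 → ℝ) (hν : ∑ i, ρ i • ν i = 0)
    (Mmat : Matrix (Fin 3) (Fin 3) ℝ) (hMmat : Mmat = ∑ i, ρ i • Matrix.vecMulVec (ν i) (ν i))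
    (Rtil Rhat : Matrix (Fin 3) (Fin 3) ℝ) (hRtil : SO3 Rtil) (hRhat : SO3 Rhat)
    (ptil : Fin 3 → ℝ) (Bptil : Fin M → Fin 3 → ℝ)
    (ξ : Fin M → Fin 3 → ℝ)
    (hξ : ∀ i, ξ i = Rtilᵀ *ᵥ ptil + (1 - Rtilᵀ) *ᵥ ν i + Rhat *ᵥ Bptil i) :
    (1/2 : ℝ) • ∑ i, ρ i • (crossProduct (ν i) (ξ i)) =
      psiMap (Mmat * Rtil) + (1/2 : ℝ) • ∑ i, ρ i • (skew (ν i) *ᵥ (Rhat *ᵥ Bptil i)) :=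
  attitude_innovation_decomposition_general M ρ ν hν Mmat hMmat Rtil Rhat ptil Bptil ξ hξ
end
end

section
/- Let 𝖬 ∈ ℝ^{3×3} be symmetric, k_R, k_p > 0, and let R̃ : ℝ → SO(3) and p̃ : ℝ → ℝ³ be differentiable with R̃'(t) = R̃(t)(−k_R ψ(𝖬R̃(t)))^× and p̃'(t) = −k_p p̃(t) (the zero-input error dynamics). Then the Lyapunov function V(t) := tr(𝖬(I₃ − R̃(t))) + (1/2)‖p̃(t)‖² is differentiable with V'(t) = −2k_R ‖ψ(𝖬R̃(t))‖² − k_p ‖p̃(t)‖² ≤ 0 for all t. -/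
open Matrix

noncomputable section

/-! Along `R' = R (-k ψ(M R))^×` the rotational part of the Lyapunov function has derivative
`-tr(M R (-k ψ(M R))^×) = -2k ‖ψ(M R)‖²`, by the identity `tr(A u^×) = -2 u ⬝ ψ(A)`; the
translational part `‖p‖²/2` has derivative `p ⬝ (-k_p p) = -k_p ‖p‖²`. -/

theorem trace_mul_skew (A : Matrix (Fin 3) (Fin 3) ℝ) (u : Fin 3 → ℝ) :
    trace (A * skew u) = -2 * ∑ i, u i * psiMap A i := by
  simp only [trace, skew, psiMap, diag_apply, mul_apply, of_apply, cons_val', cons_val_fin_one,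
    Fin.sum_univ_three, cons_val_zero, cons_val_one, cons_val, mul_zero, zero_add, mul_neg, add_zero,
    neg_mul]
  ring

theorem hasDerivAt_trace_mul {n : Type*} [Fintype n] (M : Matrix n n ℝ) {R : ℝ → Matrix n n ℝ}
    {R' : Matrix n n ℝ} {t : ℝ} (hR : ∀ i j, HasDerivAt (fun s => R s i j) (R' i j) t) :
    HasDerivAt (fun s => trace (M * R s)) (trace (M * R')) t := by
  simp only [trace, diag, mul_apply]
  exact HasDerivAt.fun_sum fun i _ => HasDerivAt.fun_sum fun j _ => (hR j i).const_mul (M i j)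

theorem hasDerivAt_half_sum_sq {ι : Type*} [Fintype ι] {p : ℝ → ι → ℝ} {p' : ι → ℝ} {t : ℝ}
    (hp : ∀ i, HasDerivAt (fun s => p s i) (p' i) t) :
    HasDerivAt (fun s => (1 / 2) * ∑ i, p s i ^ 2) (∑ i, p t i * p' i) t := by
  have hsum :=
    (HasDerivAt.fun_sum (u := Finset.univ) fun i _ => (hp i).fun_pow 2).const_mul (1 / 2 : ℝ)
  refine hsum.congr_deriv ?_
  rw [Finset.mul_sum]
  refine Finset.sum_congr rfl fun i _ => ?_
  push_cast
  ring

theorem lyapunov_decrease_zero_input_general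
    (Mmat : Matrix (Fin 3) (Fin 3) ℝ)
    (kR kp : ℝ) (hkR : 0 < kR) (hkp : 0 < kp)
    (Rtil : ℝ → Matrix (Fin 3) (Fin 3) ℝ)
    (ptil : ℝ → Fin 3 → ℝ)
    (hRdyn : ∀ t, ∀ i j, HasDerivAt (fun s => Rtil s i j)
      ((Rtil t * skew (-(kR • psiMap (Mmat * Rtil t)))) i j) t)
    (hpdyn : ∀ t, ∀ i, HasDerivAt (fun s => ptil s i) (-(kp * ptil t i)) t) :
    ∀ t, HasDerivAt (fun s => Matrix.trace (Mmat * (1 - Rtil s)) + (1/2) * ∑ i, (ptil s i) ^ 2)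
        (-(2 * kR) * ∑ i, (psiMap (Mmat * Rtil t) i) ^ 2 - kp * ∑ i, (ptil t i) ^ 2) t ∧
      (-(2 * kR) * ∑ i, (psiMap (Mmat * Rtil t) i) ^ 2 - kp * ∑ i, (ptil t i) ^ 2) ≤ 0 := by
  intro t
  have hrot := (hasDerivAt_trace_mul Mmat (hRdyn t)).const_sub (trace Mmat)
  have htrans := hasDerivAt_half_sum_sq (hpdyn t)
  refine ⟨?_, ?_⟩
  · have hV : (fun s => trace (Mmat * (1 - Rtil s)) + (1 / 2) * ∑ i, ptil s i ^ 2)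
        = fun s => (trace Mmat - trace (Mmat * Rtil s)) + (1 / 2) * ∑ i, ptil s i ^ 2 := by
      simp only [Matrix.mul_sub, Matrix.mul_one, trace_sub]
    rw [hV]
    refine (hrot.fun_add htrans).congr_deriv ?_
    rw [← Matrix.mul_assoc, trace_mul_skew]
    simp only [Pi.neg_apply, Pi.smul_apply, smul_eq_mul, Finset.mul_sum, ← Finset.sum_neg_distrib,
      ← Finset.sum_sub_distrib, ← Finset.sum_add_distrib]
    exact Finset.sum_congr rfl fun i _ => by ring
  · have hψ : 0 ≤ ∑ i, psiMap (Mmat * Rtil t) i ^ 2 := by positivity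
    have hp : 0 ≤ ∑ i, ptil t i ^ 2 := by positivity
    linarith [mul_nonneg hkR.le hψ, mul_nonneg hkp.le hp]

/-- the Lyapunov function `V = tr(𝖬(I₃ - R̃)) + ‖p̃‖²/2` is
nonincreasing along the zero-input pose error dynamics. -/
theorem lyapunov_decrease_zero_input
    (Mmat : Matrix (Fin 3) (Fin 3) ℝ) (hMsym : Mmatᵀ = Mmat)
    (kR kp : ℝ) (hkR : 0 < kR) (hkp : 0 < kp)
    (Rtil : ℝ → Matrix (Fin 3) (Fin 3) ℝ) (hRSO : ∀ t, SO3 (Rtil t))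
    (ptil : ℝ → Fin 3 → ℝ)
    (hRdyn : ∀ t, ∀ i j, HasDerivAt (fun s => Rtil s i j)
      ((Rtil t * skew (-(kR • psiMap (Mmat * Rtil t)))) i j) t)
    (hpdyn : ∀ t, ∀ i, HasDerivAt (fun s => ptil s i) (-(kp * ptil t i)) t) :
    ∀ t, HasDerivAt (fun s => Matrix.trace (Mmat * (1 - Rtil s)) + (1/2) * ∑ i, (ptil s i) ^ 2)
        (-(2 * kR) * ∑ i, (psiMap (Mmat * Rtil t) i) ^ 2 - kp * ∑ i, (ptil t i) ^ 2) t ∧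
      (-(2 * kR) * ∑ i, (psiMap (Mmat * Rtil t) i) ^ 2 - kp * ∑ i, (ptil t i) ^ 2) ≤ 0 :=
  lyapunov_decrease_zero_input_general Mmat kR kp hkR hkp Rtil ptil hRdyn hpdyn
end
end
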